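/- The operator T_0 defined by (T_0 f)(z) = ((t_0+u_0-z+1/2)(t_0-u_0-z+1/2)/(1-2z))·(f(1-z) - f(z)) + t_0·f(z) satisfies T_0² = t_0²·𝟙 on functions f : ℂ → ℂ (away from z = 1/2). -/

import Mathlib

/-!
Write `T₀ = c (s - 1) + t₀` with `s f (z) = f (1 - z)` and
`c z = (t₀ + u₀ - z + 1/2)(t₀ - u₀ - z + 1/2)/(1 - 2z)`. Putting `w = z - 1/2`,
`c z + c (1 - z) = ((t₀ + w)² - (t₀ - w)²)/(2w) = 2 t₀`. For any involution `s` and any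
coefficient with `c + s c = 2 t₀`, the difference `g (s z) - g z` of `g = T₀ f` is
`-t₀ (f (s z) - f z)`, and then `T₀ g = t₀² f`.
-/

/-- The operator `T₀` of the degenerate double affine Hecke algebra of type
`(C₁∨, C₁)`. -/
noncomputable def T0op (t0 u0 : ℂ) (f : ℂ → ℂ) : ℂ → ℂ :=
  fun z => (t0 + u0 - z + 1/2) * (t0 - u0 - z + 1/2) / (1 - 2 * z) * (f (1 - z) - f z)
    + t0 * f z

section ReflectionOp

variable {X R : Type*} [CommRing R]

def reflectionOp (σ : X → X) (c : X → R) (t : R) (f : X → R) : X → R :=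
  fun x => c x * (f (σ x) - f x) + t * f x

theorem reflectionOp_reflectionOp_apply {σ : X → X} {c : X → R} {t : R} (f : X → R) {x : X}
    (hσ : σ (σ x) = x) (hc : c x + c (σ x) = 2 * t) :
    reflectionOp σ c t (reflectionOp σ c t f) x = t ^ 2 * f x := by
  simp only [reflectionOp, hσ]
  linear_combination (-(c x) * (f (σ x) - f x)) * hc

end ReflectionOp

noncomputable def T0coeff (t0 u0 z : ℂ) : ℂ :=
  (t0 + u0 - z + 1/2) * (t0 - u0 - z + 1/2) / (1 - 2 * z)

theorem T0coeff_add_T0coeff_one_sub (t0 u0 : ℂ) {z : ℂ} (hz : z ≠ 1/2) :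
    T0coeff t0 u0 z + T0coeff t0 u0 (1 - z) = 2 * t0 := by
  have h2z : (1 : ℂ) - 2 * z ≠ 0 := by
    intro h; apply hz; linear_combination (-1/2 : ℂ) * h
  unfold T0coeff
  rw [show (1 : ℂ) - 2 * (1 - z) = -(1 - 2 * z) by ring, div_neg, ← sub_eq_add_neg,
    ← sub_div, div_eq_iff h2z]
  ring

theorem T0op_eq_reflectionOp (t0 u0 : ℂ) :
    T0op t0 u0 = reflectionOp (fun z => 1 - z) (T0coeff t0 u0) t0 :=
  rfl

/-- `T₀² = t₀² 𝟙` away from `z = 1/2`. -/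
theorem T0_sq (t0 u0 : ℂ) (f : ℂ → ℂ) (z : ℂ) (hz : z ≠ 1/2) :
    T0op t0 u0 (T0op t0 u0 f) z = t0 ^ 2 * f z := by
  rw [T0op_eq_reflectionOp]
  exact reflectionOp_reflectionOp_apply f (sub_sub_cancel 1 z)
    (T0coeff_add_T0coeff_one_sub t0 u0 hz)
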